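/- (Theorem 3, global convergence of the fair Condat–Vũ method.) Let E be a finite-dimensional real inner product space (E = ℝⁿ), f₁ : E → ℝ convex and differentiable with L-Lipschitz continuous gradient (L > 0), h : E → ℝ and φ : E → ℝ convex, and σ, τ > 0 with στ < 1 − σL. Given x⁰, y⁰ ∈ E, define sequences by: x̂ᵏ⁺¹ minimizes x ↦ h(x) + (1/(2σ))‖x − (xᵏ − σ(yᵏ + ∇f₁(xᵏ)))‖²; yᵏ⁺¹ minimizes y ↦ φ(y) + (1/(2τ))‖y − (yᵏ + τ(2x̂ᵏ⁺¹ − xᵏ))‖²; and xᵏ⁺¹ := x̂ᵏ⁺¹. Assume the Lagrangian L(x,y) = f₁(x) + h(x) + ⟨x, y⟩ − φ(y) admits at least one saddle point. Then there exists a saddle point (x*, y*) of L such that (xᵏ, yᵏ) converges to (x*, y*) as k → ∞. -/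

import Mathlib

/-!
Each iteration satisfies the optimality conditions of its two proximal steps. Adding these to the
saddle-point inequalities, the gradient inequality and the descent lemma for `f₁` shows that the
iterates are Fejér monotone with respect to every saddle point in the quadratic norm
`σ⁻¹‖u‖² − 2⟪u, v⟫ + τ⁻¹‖v‖²`, with a decrease of at least
`(σ⁻¹ − L)‖Δx‖² − 2⟪Δx, Δy⟫ + τ⁻¹‖Δy‖²` per step; both forms are positive definite because
`στ < 1 − σL`. Hence the iterates are bounded and consecutive differences vanish, so every cluster
point is a fixed point of the iteration, and fixed points are saddle points. Fejér monotonicity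
with respect to such a cluster point then forces convergence of the whole sequence.
-/

open RealInnerProductSpace

/-- `(x̂, ŷ)` is a saddle point of the Lagrangian
`L(x, y) = f₁(x) + h(x) + ⟨x, y⟩ − φ(y)`. -/
def IsSaddlePoint {E : Type*} [NormedAddCommGroup E] [InnerProductSpace ℝ E]
    (f₁ h φ : E → ℝ) (p : E × E) : Prop :=
  ∀ x y : E,
    f₁ p.1 + h p.1 + ⟪p.1, y⟫ - φ y ≤ f₁ p.1 + h p.1 + ⟪p.1, p.2⟫ - φ p.2 ∧
    f₁ p.1 + h p.1 + ⟪p.1, p.2⟫ - φ p.2 ≤ f₁ x + h x + ⟪x, p.2⟫ - φ p.2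

open Filter Set Topology

section Fejer

variable {F : Type*} [NormedAddCommGroup F]

lemma tendsto_of_mul_norm_sub_sq_le {c : ℝ} (hc : 0 < c) {g : ℕ → F} {p : F} {a : ℕ → ℝ}
    (ha : Tendsto a atTop (𝓝 0)) (hg : ∀ k, c * ‖g k - p‖ ^ 2 ≤ a k) :
    Tendsto g atTop (𝓝 p) := by
  have hsq : Tendsto (fun k => ‖g k - p‖ ^ 2) atTop (𝓝 0) :=
    squeeze_zero (fun k => by positivity) (fun k => (le_div_iff₀' hc).2 (hg k))
      (by simpa using ha.div_const c)
  rw [tendsto_iff_norm_sub_tendsto_zero]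
  simpa using hsq.sqrt

lemma tendsto_succ_sub_of_mul_norm_sq_le {V : ℕ → ℝ} (hV : ∀ k, 0 ≤ V k) {c : ℝ} (hc : 0 < c)
    {z : ℕ → F} (h : ∀ k, c * ‖z (k + 1) - z k‖ ^ 2 ≤ V k - V (k + 1)) :
    Tendsto (fun k => z (k + 1) - z k) atTop (𝓝 0) := by
  have hanti : Antitone V :=
    antitone_nat_of_succ_le fun k => sub_nonneg.1 ((mul_nonneg hc.le (sq_nonneg _)).trans (h k))
  have hV := tendsto_atTop_ciInf hanti ⟨0, by rintro _ ⟨k, rfl⟩; exact hV k⟩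
  refine tendsto_of_mul_norm_sub_sq_le hc (a := fun k => V k - V (k + 1)) ?_ (by simpa using h)
  simpa using hV.sub (hV.comp (tendsto_add_atTop_nat 1))

theorem exists_tendsto_of_fejer [ProperSpace F] {R : F → F → Prop}
    (hR : IsClosed {q : F × F | R q.1 q.2}) {S : Set F} (hRS : ∀ p, R p p → p ∈ S)
    (hS : S.Nonempty) {Q : F → ℝ} (hQ : Continuous Q) (hQ0 : Q 0 = 0) {c : ℝ} (hc : 0 < c)
    (hcQ : ∀ w, c * ‖w‖ ^ 2 ≤ Q w) {z : ℕ → F} (hz : ∀ k, R (z k) (z (k + 1)))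
    (hfejer : ∀ s ∈ S, ∀ k, Q (z (k + 1) - s) + c * ‖z (k + 1) - z k‖ ^ 2 ≤ Q (z k - s)) :
    ∃ p ∈ S, Tendsto z atTop (𝓝 p) := by
  have hQnonneg : ∀ w, 0 ≤ Q w := fun w => (mul_nonneg hc.le (sq_nonneg _)).trans (hcQ w)
  have hanti : ∀ s ∈ S, Antitone fun k => Q (z k - s) := fun s hs => antitone_nat_of_succ_le
    fun k => (le_add_of_nonneg_right (mul_nonneg hc.le (sq_nonneg _))).trans (hfejer s hs k)
  obtain ⟨s₀, hs₀⟩ := hS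
  have hbdd : ∀ k, z k ∈ Metric.closedBall s₀ √(Q (z 0 - s₀) / c) := fun k => by
    rw [Metric.mem_closedBall, dist_eq_norm]
    refine Real.le_sqrt_of_sq_le ((le_div_iff₀' hc).2 ?_)
    exact (hcQ _).trans (hanti s₀ hs₀ (Nat.zero_le k))
  obtain ⟨p, -, ℓ, hℓ, hzℓ⟩ := tendsto_subseq_of_bounded Metric.isBounded_closedBall hbdd
  have hstep : Tendsto (fun k => z (k + 1) - z k) atTop (𝓝 0) :=
    tendsto_succ_sub_of_mul_norm_sq_le (fun k => hQnonneg (z k - s₀)) hc fun k => by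
      linarith [hfejer s₀ hs₀ k]
  have hzℓ' : Tendsto (fun j => z (ℓ j + 1)) atTop (𝓝 p) := by
    simpa using hzℓ.add (hstep.comp hℓ.tendsto_atTop)
  have hp : p ∈ S := hRS p <| hR.mem_of_tendsto (hzℓ.prodMk_nhds hzℓ')
    (Eventually.of_forall fun j => hz (ℓ j))
  refine ⟨p, hp, tendsto_of_mul_norm_sub_sq_le hc ?_ fun k => hcQ (z k - p)⟩
  rw [tendsto_iff_tendsto_subseq_of_antitone (hanti p hp) hℓ.tendsto_atTop, ← hQ0]
  simpa [Function.comp_def] using (hQ.tendsto _).comp (hzℓ.sub_const p)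

end Fejer

section ConvexAnalysis

variable {E : Type*} [NormedAddCommGroup E] [InnerProductSpace ℝ E]

lemma HasGradientAt.hasDerivAt_comp_lineMap [CompleteSpace E] {f : E → ℝ} {g x z : E} {t : ℝ}
    (hf : HasGradientAt f g (AffineMap.lineMap x z t)) :
    HasDerivAt (fun s : ℝ => f (AffineMap.lineMap x z s)) ⟪g, z - x⟫ t := by
  have := hf.hasFDerivAt.comp_hasDerivAt t (AffineMap.hasDerivAt_lineMap (a := x) (b := z))
  rwa [InnerProductSpace.toDual_apply_apply] at this

lemma ConvexOn.add_inner_le_of_hasGradientAt [CompleteSpace E] {f : E → ℝ} {g x : E}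
    (hconv : ConvexOn ℝ univ f) (hf : HasGradientAt f g x) (z : E) :
    f x + ⟪g, z - x⟫ ≤ f z := by
  have hline := (hconv.comp_affineMap (AffineMap.lineMap x z)).le_slope_of_hasDerivAt
    (mem_univ 0) (mem_univ 1) zero_lt_one
    (HasGradientAt.hasDerivAt_comp_lineMap (t := 0) (by simpa using hf))
  rw [slope_def_field] at hline
  simp only [Function.comp_apply, AffineMap.lineMap_apply_one, AffineMap.lineMap_apply_zero,
    sub_zero, div_one] at hline
  linarith

lemma le_add_inner_add_sq_of_gradient_lipschitz [CompleteSpace E] {f : E → ℝ} {f' : E → E}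
    {L : ℝ} (hf : ∀ x, HasGradientAt f (f' x) x)
    (hlip : ∀ a b, ‖f' a - f' b‖ ≤ L * ‖a - b‖) (x z : E) :
    f z ≤ f x + ⟪f' x, z - x⟫ + L / 2 * ‖z - x‖ ^ 2 := by
  set G : ℝ → ℝ := fun t =>
    f (AffineMap.lineMap x z t) - t * ⟪f' x, z - x⟫ - t ^ 2 * (L / 2 * ‖z - x‖ ^ 2)
  have hG : ∀ t, HasDerivAt G
      (⟪f' (AffineMap.lineMap x z t) - f' x, z - x⟫ - t * (L * ‖z - x‖ ^ 2)) t := by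
    intro t
    have := (((hf (AffineMap.lineMap x z t)).hasDerivAt_comp_lineMap).sub
      ((hasDerivAt_id t).mul_const ⟪f' x, z - x⟫)).sub
      ((hasDerivAt_pow 2 t).mul_const (L / 2 * ‖z - x‖ ^ 2))
    refine this.congr_deriv ?_
    rw [inner_sub_left]; ring
  obtain ⟨t, ht, hGt⟩ := exists_hasDerivAt_eq_slope G _ zero_lt_one
    (fun t _ => (hG t).continuousAt.continuousWithinAt) (fun t _ => hG t)
  have hderiv : ⟪f' (AffineMap.lineMap x z t) - f' x, z - x⟫ ≤ t * (L * ‖z - x‖ ^ 2) := calc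
    _ ≤ ‖f' (AffineMap.lineMap x z t) - f' x‖ * ‖z - x‖ := real_inner_le_norm _ _
    _ ≤ L * ‖AffineMap.lineMap x z t - x‖ * ‖z - x‖ := by gcongr; exact hlip _ _
    _ = t * (L * ‖z - x‖ ^ 2) := by
      rw [AffineMap.lineMap_apply, vadd_eq_add, vsub_eq_sub, add_sub_cancel_right, norm_smul,
        Real.norm_of_nonneg ht.1.le]
      ring
  have hG10 : G 1 ≤ G 0 := by
    rw [sub_zero, div_one] at hGt
    linarith
  simp only [G, AffineMap.lineMap_apply_one, AffineMap.lineMap_apply_zero] at hG10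
  linarith

lemma ConvexOn.add_inner_le_of_prox_le {F : E → ℝ} (hF : ConvexOn ℝ univ F) {σ : ℝ}
    {a p : E}
    (hp : ∀ z, F p + 1 / (2 * σ) * ‖p - a‖ ^ 2 ≤ F z + 1 / (2 * σ) * ‖z - a‖ ^ 2) (z : E) :
    F p + ⟪σ⁻¹ • (a - p), z - p⟫ ≤ F z := by
  have hsmall : ∀ t ∈ Ioo (0 : ℝ) 1,
      F p - F z - σ⁻¹ * ⟪p - a, z - p⟫ ≤ t * (‖z - p‖ ^ 2 / (2 * σ)) := by
    rintro t ⟨ht0, ht1⟩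
    have hconv := hF.2 (mem_univ p) (mem_univ z) (sub_nonneg.2 ht1.le) ht0.le (sub_add_cancel 1 t)
    rw [show (1 - t) • p + t • z = p + t • (z - p) by rw [smul_sub, sub_smul, one_smul]; abel,
      smul_eq_mul, smul_eq_mul] at hconv
    have hmin := hp (p + t • (z - p))
    rw [show p + t • (z - p) - a = (p - a) + t • (z - p) by abel, norm_add_sq_real,
      real_inner_smul_right, norm_smul, Real.norm_of_nonneg ht0.le] at hmin
    refine le_of_mul_le_mul_left ?_ ht0
    linear_combination hmin + hconv
  have hlim : Tendsto (fun t => t * (‖z - p‖ ^ 2 / (2 * σ))) (𝓝[>] 0) (𝓝 0) :=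
    tendsto_nhdsWithin_of_tendsto_nhds
      (by simpa using (continuous_mul_const (‖z - p‖ ^ 2 / (2 * σ))).tendsto (0 : ℝ))
  have hX := ge_of_tendsto hlim (Filter.mem_of_superset (Ioo_mem_nhdsGT one_pos) hsmall)
  rw [real_inner_smul_left, ← neg_sub p a, inner_neg_left]
  linarith

end ConvexAnalysis

section CondatVu

variable {E : Type*} [NormedAddCommGroup E] [InnerProductSpace ℝ E]

def coupledQuadForm (a b : ℝ) (w : E × E) : ℝ :=
  a * ‖w.1‖ ^ 2 - 2 * ⟪w.1, w.2⟫ + b * ‖w.2‖ ^ 2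

lemma coupledQuadForm_nonneg {a b : ℝ} (ha : 0 < a) (hab : 1 ≤ a * b) (w : E × E) :
    0 ≤ coupledQuadForm a b w := by
  have hcs := real_inner_le_norm w.1 w.2
  have hsq := sq_nonneg (a * ‖w.1‖ - ‖w.2‖)
  rw [coupledQuadForm, ← mul_nonneg_iff_of_pos_left ha]
  nlinarith [mul_nonneg (sub_nonneg.2 hab) (sq_nonneg ‖w.2‖)]

lemma mul_norm_sq_le_coupledQuadForm {a b : ℝ} (ha : 0 < a) (hb : 0 < b) (hab : 1 < a * b)
    (w : E × E) : (a * b - 1) / (a + b) * ‖w‖ ^ 2 ≤ coupledQuadForm a b w := by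
  -- `c` is chosen so that `(a - c) * (b - c) = 1 + c ^ 2`.
  set c := (a * b - 1) / (a + b)
  have hc : 0 ≤ c := div_nonneg (by linarith) (by positivity)
  have hc_mul : c * (a + b) = a * b - 1 := div_mul_cancel₀ _ (by positivity)
  have hac : 0 < a - c := pos_of_mul_pos_left (b := a + b) (by nlinarith) (by positivity)
  have habc : 1 ≤ (a - c) * (b - c) := by nlinarith [sq_nonneg c]
  have hnorm : ‖w‖ ^ 2 ≤ ‖w.1‖ ^ 2 + ‖w.2‖ ^ 2 := by
    rcases max_cases ‖w.1‖ ‖w.2‖ with ⟨h, -⟩ | ⟨h, -⟩ <;> rw [Prod.norm_def, h] <;>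
      nlinarith [sq_nonneg ‖w.1‖, sq_nonneg ‖w.2‖]
  have := coupledQuadForm_nonneg (b := b - c) hac habc w
  unfold coupledQuadForm at this ⊢
  nlinarith [mul_le_mul_of_nonneg_left hnorm hc]

lemma coupledQuadForm_le_of_le {a a' : ℝ} (h : a ≤ a') (b : ℝ) (w : E × E) :
    coupledQuadForm a b w ≤ coupledQuadForm a' b w := by
  unfold coupledQuadForm; gcongr

lemma continuous_coupledQuadForm (a b : ℝ) : Continuous (coupledQuadForm (E := E) a b) := by
  unfold coupledQuadForm; fun_prop

lemma coupledQuadForm_zero (a b : ℝ) : coupledQuadForm a b (0 : E × E) = 0 := by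
  simp [coupledQuadForm]

/-- The optimality conditions of the two proximal steps of a Condat–Vũ iteration `z ↦ z'`. -/
def CondatVuStep (f₁' : E → E) (h φ : E → ℝ) (σ τ : ℝ) (z z' : E × E) : Prop :=
  (∀ u, h z'.1 + ⟪σ⁻¹ • (z.1 - z'.1) - (z.2 + f₁' z.1), u - z'.1⟫ ≤ h u) ∧
    ∀ v, φ z'.2 + ⟪τ⁻¹ • (z.2 - z'.2) + (2 • z'.1 - z.1), v - z'.2⟫ ≤ φ v

variable {f₁ h φ : E → ℝ} {f₁' : E → E} {σ τ : ℝ}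

lemma condatVuStep_of_prox (hh : ConvexOn ℝ univ h) (hφ : ConvexOn ℝ univ φ)
    (hσ : σ ≠ 0) (hτ : τ ≠ 0) {x y x' y' : E}
    (hx' : ∀ u, h x' + 1 / (2 * σ) * ‖x' - (x - σ • (y + f₁' x))‖ ^ 2 ≤
      h u + 1 / (2 * σ) * ‖u - (x - σ • (y + f₁' x))‖ ^ 2)
    (hy' : ∀ v, φ y' + 1 / (2 * τ) * ‖y' - (y + τ • (2 • x' - x))‖ ^ 2 ≤
      φ v + 1 / (2 * τ) * ‖v - (y + τ • (2 • x' - x))‖ ^ 2) :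
    CondatVuStep f₁' h φ σ τ (x, y) (x', y') := by
  have hx_vec : σ⁻¹ • (x - σ • (y + f₁' x) - x') = σ⁻¹ • (x - x') - (y + f₁' x) := by
    rw [sub_right_comm, smul_sub _ (x - x'), smul_smul, inv_mul_cancel₀ hσ, one_smul]
  have hy_vec : τ⁻¹ • (y + τ • (2 • x' - x) - y') = τ⁻¹ • (y - y') + (2 • x' - x) := by
    rw [add_sub_right_comm, smul_add, smul_smul, inv_mul_cancel₀ hτ, one_smul]
  constructor
  · intro u
    have := hh.add_inner_le_of_prox_le hx' u
    rwa [hx_vec] at this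
  · intro v
    have := hφ.add_inner_le_of_prox_le hy' v
    rwa [hy_vec] at this

lemma isClosed_condatVuStep (hf₁' : Continuous f₁') (hh : Continuous h) (hφ : Continuous φ) :
    IsClosed {q : (E × E) × (E × E) | CondatVuStep f₁' h φ σ τ q.1 q.2} := by
  simp only [CondatVuStep, ofPred_and, ofPred_forall]
  refine .inter (isClosed_iInter fun u => isClosed_le ?_ continuous_const)
    (isClosed_iInter fun v => isClosed_le ?_ continuous_const) <;> fun_prop

variable [CompleteSpace E]

lemma CondatVuStep.isSaddlePoint (hf₁ : ConvexOn ℝ univ f₁)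
    (hf₁' : ∀ x, HasGradientAt f₁ (f₁' x) x) {p : E × E}
    (hp : CondatVuStep f₁' h φ σ τ p p) : IsSaddlePoint f₁ h φ p := by
  intro x y
  have hx := hp.1 x
  have hy := hp.2 y
  simp only [sub_self, smul_zero, zero_sub, zero_add, two_nsmul, add_sub_cancel_right] at hx hy
  have hgrad := hf₁.add_inner_le_of_hasGradientAt (hf₁' p.1) x
  simp only [inner_neg_left, inner_add_left, inner_sub_right, real_inner_comm p.2] at hx hy hgrad ⊢
  constructor <;> linarith

lemma CondatVuStep.coupledQuadForm_add_le {L : ℝ} (hf₁ : ConvexOn ℝ univ f₁)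
    (hf₁' : ∀ x, HasGradientAt f₁ (f₁' x) x) (hlip : ∀ a b, ‖f₁' a - f₁' b‖ ≤ L * ‖a - b‖)
    {z z' s : E × E} (hstep : CondatVuStep f₁' h φ σ τ z z') (hs : IsSaddlePoint f₁ h φ s) :
    coupledQuadForm σ⁻¹ τ⁻¹ (z' - s) + coupledQuadForm (σ⁻¹ - L) τ⁻¹ (z' - z)
      ≤ coupledQuadForm σ⁻¹ τ⁻¹ (z - s) := by
  rcases z with ⟨p, r⟩
  rcases z' with ⟨q, t⟩
  rcases s with ⟨u, v⟩
  have hA := hstep.1 u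
  have hB := hstep.2 v
  have hS := (hs q t).1.trans (hs q t).2
  have hC := le_add_inner_add_sq_of_gradient_lipschitz hf₁' hlip p q
  have hD := hf₁.add_inner_le_of_hasGradientAt (hf₁' p) u
  -- Once all inner products are expanded, the claim is a linear combination of these five.
  simp only [coupledQuadForm, Prod.mk_sub_mk, ← real_inner_self_eq_norm_sq, two_nsmul]
    at hB hC ⊢
  simp only [inner_sub_left, inner_sub_right, inner_add_left, real_inner_smul_left]
    at hA hB hC hD ⊢
  simp only [real_inner_comm] at hA hB hC hD hS ⊢
  linarith

end CondatVu

theorem stmt_13 {E : Type*} [NormedAddCommGroup E] [InnerProductSpace ℝ E]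
    [FiniteDimensional ℝ E]
    (f₁ h φ : E → ℝ) (f₁' : E → E) (L : ℝ) (hL : 0 < L)
    (hf₁conv : ConvexOn ℝ Set.univ f₁)
    (hf₁diff : ∀ x, HasGradientAt f₁ (f₁' x) x)
    (hf₁lip : ∀ x y, ‖f₁' x - f₁' y‖ ≤ L * ‖x - y‖)
    (hhconv : ConvexOn ℝ Set.univ h)
    (hφconv : ConvexOn ℝ Set.univ φ)
    (σ τ : ℝ) (hσ : 0 < σ) (hτ : 0 < τ) (hcond : σ * τ < 1 - σ * L)
    (x y xhat : ℕ → E)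
    (hxhat : ∀ k, ∀ z : E,
      h (xhat (k + 1)) +
          1 / (2 * σ) * ‖xhat (k + 1) - (x k - σ • (y k + f₁' (x k)))‖ ^ 2 ≤
      h z + 1 / (2 * σ) * ‖z - (x k - σ • (y k + f₁' (x k)))‖ ^ 2)
    (hy : ∀ k, ∀ w : E,
      φ (y (k + 1)) +
          1 / (2 * τ) * ‖y (k + 1) - (y k + τ • (2 • xhat (k + 1) - x k))‖ ^ 2 ≤
      φ w + 1 / (2 * τ) * ‖w - (y k + τ • (2 • xhat (k + 1) - x k))‖ ^ 2)
    (hx : ∀ k, x (k + 1) = xhat (k + 1))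
    (hsaddle : ∃ p : E × E, IsSaddlePoint f₁ h φ p) :
    ∃ p : E × E, IsSaddlePoint f₁ h φ p ∧
      Filter.Tendsto (fun k => (x k, y k)) Filter.atTop (nhds p) := by
  have hstep k : CondatVuStep f₁' h φ σ τ (x k, y k) (x (k + 1), y (k + 1)) :=
    condatVuStep_of_prox hhconv hφconv hσ.ne' hτ.ne' (hx k ▸ hxhat k) (hx k ▸ hy k)
  have hclosed : IsClosed {q : (E × E) × (E × E) | CondatVuStep f₁' h φ σ τ q.1 q.2} :=
    isClosed_condatVuStep
      (LipschitzWith.of_dist_le' (K := L) (by simpa only [dist_eq_norm] using hf₁lip)).continuous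
      (continuousOn_univ.1 (hhconv.continuousOn isOpen_univ))
      (continuousOn_univ.1 (hφconv.continuousOn isOpen_univ))
  have hτσ : τ < σ⁻¹ - L := by
    rw [lt_sub_iff_add_lt, ← one_div, lt_div_iff₀' hσ]
    linarith [mul_add σ τ L]
  have hab : 1 < (σ⁻¹ - L) * τ⁻¹ := calc
    1 = τ * τ⁻¹ := (mul_inv_cancel₀ hτ.ne').symm
    _ < (σ⁻¹ - L) * τ⁻¹ := mul_lt_mul_of_pos_right hτσ (inv_pos.2 hτ)
  have hcW := mul_norm_sq_le_coupledQuadForm (E := E) (hτ.trans hτσ) (inv_pos.2 hτ) hab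
  have hc : 0 < ((σ⁻¹ - L) * τ⁻¹ - 1) / ((σ⁻¹ - L) + τ⁻¹) := by
    have := inv_pos.2 hτ
    apply div_pos <;> linarith
  exact exists_tendsto_of_fejer hclosed (fun p hp => hp.isSaddlePoint hf₁conv hf₁diff) hsaddle
    (continuous_coupledQuadForm σ⁻¹ τ⁻¹) (coupledQuadForm_zero _ _) hc
    (fun w => (hcW w).trans (coupledQuadForm_le_of_le (by linarith) _ w)) hstep
    fun s hs k => (add_le_add_right (hcW _) _).trans
      ((hstep k).coupledQuadForm_add_le hf₁conv hf₁diff hf₁lip hs)
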